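/- arXiv:2303.05784 — 2 statements merged into one kernel-verified Lean document; each statement's English description precedes it below -/
import Mathlib

section
/- If $v$ lies in the Adini-type shape function space $\mathcal{P}_A = Q_1 \cdot \operatorname{span}\{1, x_k^2, x_k^4 : 1\le k\le n\}$, then $\partial v / \partial x_i$ lies in $Q_1 \cdot \operatorname{span}\{1, x_i^2\} + W_i$, where $W_i = Q_1^{\hat i} \cdot \operatorname{span}\{(x_k^2-1) : k \ne i\} + Q_1^{\hat i} \cdot \operatorname{span}\{(x_t^2-1)^2 : 1 \le t \le n\}$. -/
open MvPolynomial

/-!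
Write a multilinear monomial as `m` or `xᵢ m` with `m ∈ Q1^{î}`. Since `∂ᵢ m = 0`, the
derivative of a generator `xᵢ^e m b` of `P_A` is `m ∂ᵢ(xᵢ^e b)`, so it suffices that every
`∂ᵢ(xᵢ^e b)` lies in the colon space `T / Q1^{î}`, where `T = Q1 · span{1, xᵢ²} + Wᵢ`.
These derivatives are multiples of `xᵢ^p` (`p ≤ 4`) and of `x_k²`, `x_k⁴` (`k ≠ i`), which
reach `T` through `xᵢ⁴ = (xᵢ² - 1)² + 2xᵢ² - 1`, `x_k² = (x_k² - 1) + 1` and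
`x_k⁴ = (x_k² - 1)² + 2(x_k² - 1) + 1`.
-/

/-- `Q1`: span of the multilinear monomials (each exponent at most 1). -/
noncomputable def Q1 (n : ℕ) : Submodule ℝ (MvPolynomial (Fin n) ℝ) :=
  Submodule.span ℝ {p | ∃ α : Fin n →₀ ℕ, (∀ i, α i ≤ 1) ∧ p = monomial α (1 : ℝ)}

/-- `Q1^{î}`: the span of multilinear monomials not involving `x_i`. -/
noncomputable def Q1hat (n : ℕ) (i : Fin n) : Submodule ℝ (MvPolynomial (Fin n) ℝ) :=
  Submodule.span ℝ
    {p | ∃ α : Fin n →₀ ℕ, (∀ j, α j ≤ 1) ∧ α i = 0 ∧ p = monomial α (1 : ℝ)}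

/-- `A · B`: the span of products of elements of `A` and `B`. -/
noncomputable def prodSpan {n : ℕ} (A B : Submodule ℝ (MvPolynomial (Fin n) ℝ)) :
    Submodule ℝ (MvPolynomial (Fin n) ℝ) :=
  Submodule.span ℝ {p | ∃ a ∈ A, ∃ b ∈ B, p = a * b}

/-- Adini-type shape function space `P_A = Q1 · span{1, x_k², x_k⁴}`. -/
noncomputable def PA (n : ℕ) : Submodule ℝ (MvPolynomial (Fin n) ℝ) :=
  prodSpan (Q1 n)
    (Submodule.span ℝ ({1} ∪ {p | ∃ k : Fin n, p = X k ^ 2 ∨ p = X k ^ 4}))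

/-- `W_i = Q1^{î} · span{(x_k²-1) : k ≠ i} + Q1^{î} · span{(x_t²-1)² : 1 ≤ t ≤ n}`. -/
noncomputable def Wspace (n : ℕ) (i : Fin n) : Submodule ℝ (MvPolynomial (Fin n) ℝ) :=
  prodSpan (Q1hat n i) (Submodule.span ℝ {p | ∃ k : Fin n, k ≠ i ∧ p = X k ^ 2 - 1}) ⊔
    prodSpan (Q1hat n i) (Submodule.span ℝ {p | ∃ t : Fin n, p = (X t ^ 2 - 1) ^ 2})

namespace MvPolynomial

variable {R σ : Type*} [CommSemiring R]

theorem pderiv_X_pow_self (i : σ) (p : ℕ) :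
    pderiv i (X i ^ p : MvPolynomial σ R) = p • X i ^ (p - 1) := by
  simp [Derivation.leibniz_pow, pderiv_X_self]

theorem pderiv_X_pow_of_ne {i k : σ} (hk : k ≠ i) (p : ℕ) :
    pderiv i (X k ^ p : MvPolynomial σ R) = 0 := by
  simp [Derivation.leibniz_pow, pderiv_X_of_ne hk]

theorem pderiv_X_pow_mul_X_pow_of_ne {i k : σ} (hk : k ≠ i) {e : ℕ} (he : e ≤ 1) (p : ℕ) :
    pderiv i (X i ^ e * X k ^ p : MvPolynomial σ R) = e • X k ^ p := by
  rw [pderiv_mul, pderiv_X_pow_of_ne hk, mul_zero, add_zero, pderiv_X_pow_self,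
    Nat.sub_eq_zero_of_le he, pow_zero, smul_mul_assoc, one_mul]

theorem pderiv_monomial_of_apply_eq_zero {i : σ} {α : σ →₀ ℕ} (hα : α i = 0) (a : R) :
    pderiv i (monomial α a) = 0 := by
  simp [pderiv_monomial, hα]

theorem monomial_eq_monomial_erase_mul_X_pow (α : σ →₀ ℕ) (i : σ) (a : R) :
    monomial α a = monomial (α.erase i) a * X i ^ α i := by
  rw [← monomial_add_single, Finsupp.erase_add_single]

end MvPolynomial

theorem prodSpan_eq_mul {n : ℕ} (A B : Submodule ℝ (MvPolynomial (Fin n) ℝ)) :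
    prodSpan A B = A * B := by
  rw [Submodule.mul_eq_span_mul_set, prodSpan]
  congr 1
  ext p
  simp [Set.mem_mul, eq_comm]

noncomputable def adiniDerivSpace (n : ℕ) (i : Fin n) :
    Submodule ℝ (MvPolynomial (Fin n) ℝ) :=
  prodSpan (Q1 n) (Submodule.span ℝ {1, X i ^ 2}) ⊔ Wspace n i

section AdiniDerivSpace

variable {n : ℕ} {i : Fin n}

theorem Q1hat_le_Q1 : Q1hat n i ≤ Q1 n :=
  Submodule.span_mono fun _ ⟨α, hα, _, hp⟩ => ⟨α, hα, hp⟩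

theorem monomial_erase_mem_Q1hat {α : Fin n →₀ ℕ} (hα : ∀ j, α j ≤ 1) :
    monomial (α.erase i) (1 : ℝ) ∈ Q1hat n i := by
  refine Submodule.subset_span ⟨α.erase i, fun j => ?_, Finsupp.erase_same, rfl⟩
  rw [Finsupp.erase_apply]
  split_ifs
  exacts [zero_le_one, hα j]

theorem pderiv_mul_of_mem_Q1hat {m : MvPolynomial (Fin n) ℝ} (hm : m ∈ Q1hat n i)
    (g : MvPolynomial (Fin n) ℝ) : pderiv i (m * g) = m * pderiv i g := by
  have hm' : pderiv i m = 0 := by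
    refine (Submodule.span_le (p := LinearMap.ker (pderiv i).toLinearMap) |>.2 ?_) hm
    rintro _ ⟨α, -, hαi, rfl⟩
    exact pderiv_monomial_of_apply_eq_zero hαi 1
  rw [pderiv_mul, hm', zero_mul, zero_add]

theorem X_mul_mem_Q1 {m : MvPolynomial (Fin n) ℝ} (hm : m ∈ Q1hat n i) : X i * m ∈ Q1 n := by
  refine (Submodule.span_le (p := (Q1 n).comap (LinearMap.mulLeft ℝ (X i))) |>.2 ?_) hm
  rintro _ ⟨α, hα, hαi, rfl⟩
  rw [SetLike.mem_coe, Submodule.mem_comap, LinearMap.mulLeft_apply, ← pow_one (X i),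
    ← monomial_single_add]
  refine Submodule.subset_span ⟨_, fun j => ?_, rfl⟩
  rcases eq_or_ne j i with rfl | hj
  · simp [hαi]
  · simpa [Finsupp.single_apply, hj.symm] using hα j

theorem mem_div_Q1hat_of_mem_span {f : MvPolynomial (Fin n) ℝ}
    (hf : f ∈ Submodule.span ℝ {1, X i ^ 2}) : f ∈ adiniDerivSpace n i / Q1hat n i :=
  Submodule.mem_div_iff_forall_mul_mem.2 fun m hm => mul_comm m f ▸
    Submodule.mem_sup_left (Submodule.subset_span ⟨m, Q1hat_le_Q1 hm, f, hf, rfl⟩)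

theorem X_mul_mem_div_Q1hat {f : MvPolynomial (Fin n) ℝ}
    (hf : f ∈ Submodule.span ℝ {1, X i ^ 2}) : X i * f ∈ adiniDerivSpace n i / Q1hat n i :=
  Submodule.mem_div_iff_forall_mul_mem.2 fun m hm => (by ring : X i * m * f = X i * f * m) ▸
    Submodule.mem_sup_left (Submodule.subset_span ⟨X i * m, X_mul_mem_Q1 hm, f, hf, rfl⟩)

theorem X_sq_sub_one_mem_div_Q1hat {k : Fin n} (hk : k ≠ i) :
    X k ^ 2 - 1 ∈ adiniDerivSpace n i / Q1hat n i :=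
  Submodule.mem_div_iff_forall_mul_mem.2 fun m hm => Submodule.mem_sup_right <|
    Submodule.mem_sup_left <|
      Submodule.subset_span ⟨m, hm, _, Submodule.subset_span ⟨k, hk, rfl⟩, mul_comm _ _⟩

theorem X_sq_sub_one_sq_mem_div_Q1hat (t : Fin n) :
    (X t ^ 2 - 1) ^ 2 ∈ adiniDerivSpace n i / Q1hat n i :=
  Submodule.mem_div_iff_forall_mul_mem.2 fun m hm => Submodule.mem_sup_right <|
    Submodule.mem_sup_right <|
      Submodule.subset_span ⟨m, hm, _, Submodule.subset_span ⟨t, rfl⟩, mul_comm _ _⟩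

theorem one_mem_div_Q1hat : (1 : MvPolynomial (Fin n) ℝ) ∈ adiniDerivSpace n i / Q1hat n i :=
  mem_div_Q1hat_of_mem_span (Submodule.subset_span (Set.mem_insert _ _))

theorem X_sq_mem_span : (X i ^ 2 : MvPolynomial (Fin n) ℝ) ∈ Submodule.span ℝ {1, X i ^ 2} :=
  Submodule.subset_span (Set.mem_insert_of_mem _ rfl)

theorem X_pow_mem_div_Q1hat {p : ℕ} (hp : p ≤ 4) :
    X i ^ p ∈ adiniDerivSpace n i / Q1hat n i := by
  have hsq := mem_div_Q1hat_of_mem_span (X_sq_mem_span (i := i))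
  interval_cases p
  · simpa using one_mem_div_Q1hat
  · simpa using X_mul_mem_div_Q1hat (i := i) (Submodule.subset_span (Set.mem_insert _ _))
  · exact hsq
  · simpa [← pow_succ'] using X_mul_mem_div_Q1hat X_sq_mem_span
  · rw [(by ring : (X i : MvPolynomial (Fin n) ℝ) ^ 4 =
      (X i ^ 2 - 1) ^ 2 + (X i ^ 2 + X i ^ 2) - 1)]
    exact sub_mem (add_mem (X_sq_sub_one_sq_mem_div_Q1hat i) (add_mem hsq hsq)) one_mem_div_Q1hat

theorem X_pow_mem_div_Q1hat_of_ne {k : Fin n} (hk : k ≠ i) {p : ℕ} (hp : p = 2 ∨ p = 4) :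
    X k ^ p ∈ adiniDerivSpace n i / Q1hat n i := by
  have hsub := X_sq_sub_one_mem_div_Q1hat hk
  rcases hp with rfl | rfl
  · rw [← sub_add_cancel (X k ^ 2) 1]
    exact add_mem hsub one_mem_div_Q1hat
  · rw [(by ring : (X k : MvPolynomial (Fin n) ℝ) ^ 4 =
      (X k ^ 2 - 1) ^ 2 + ((X k ^ 2 - 1) + (X k ^ 2 - 1)) + 1)]
    exact add_mem (add_mem (X_sq_sub_one_sq_mem_div_Q1hat k) (add_mem hsub hsub))
      one_mem_div_Q1hat

theorem pderiv_X_pow_mul_mem_div_Q1hat {e : ℕ} (he : e ≤ 1) {b : MvPolynomial (Fin n) ℝ}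
    (hb : b ∈ ({1} ∪ {p | ∃ k : Fin n, p = X k ^ 2 ∨ p = X k ^ 4} :
      Set (MvPolynomial (Fin n) ℝ))) :
    pderiv i (X i ^ e * b) ∈ adiniDerivSpace n i / Q1hat n i := by
  rcases hb with rfl | ⟨k, hb⟩
  · rw [mul_one, pderiv_X_pow_self]
    exact nsmul_mem (X_pow_mem_div_Q1hat (by omega)) _
  obtain ⟨p, hp, rfl⟩ : ∃ p, (p = 2 ∨ p = 4) ∧ b = X k ^ p := by
    rcases hb with rfl | rfl <;> exact ⟨_, by simp, rfl⟩
  rcases eq_or_ne k i with rfl | hk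
  · rw [← pow_add, pderiv_X_pow_self]
    exact nsmul_mem (X_pow_mem_div_Q1hat (by omega)) _
  · rw [pderiv_X_pow_mul_X_pow_of_ne hk he]
    exact nsmul_mem (X_pow_mem_div_Q1hat_of_ne hk hp) _

end AdiniDerivSpace

theorem adini_type_pderiv_decomposition_general (n : ℕ) (i : Fin n)
    (v : MvPolynomial (Fin n) ℝ) (hv : v ∈ PA n) :
    pderiv i v ∈
      prodSpan (Q1 n) (Submodule.span ℝ {1, X i ^ 2}) ⊔ Wspace n i := by
  suffices PA n ≤ (adiniDerivSpace n i).comap (pderiv i).toLinearMap from this hv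
  rw [PA, prodSpan_eq_mul, Q1, Submodule.span_mul_span, Submodule.span_le, Set.mul_subset_iff]
  rintro _ ⟨α, hα, rfl⟩ b hb
  have hm : monomial (α.erase i) (1 : ℝ) ∈ Q1hat n i := monomial_erase_mem_Q1hat hα
  rw [SetLike.mem_coe, Submodule.mem_comap, Derivation.coeFn_coe,
    monomial_eq_monomial_erase_mul_X_pow α i, mul_assoc, pderiv_mul_of_mem_Q1hat hm, mul_comm]
  exact Submodule.mem_div_iff_forall_mul_mem.1 (pderiv_X_pow_mul_mem_div_Q1hat (hα i) hb) _ hm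

/-- If `v` lies in the Adini-type shape space `P_A`, then
`∂v/∂x_i ∈ Q1 · span{1, x_i²} + W_i`. -/
theorem adini_type_pderiv_decomposition (n : ℕ) (hn : 2 ≤ n) (i : Fin n)
    (v : MvPolynomial (Fin n) ℝ) (hv : v ∈ PA n) :
    pderiv i v ∈
      prodSpan (Q1 n) (Submodule.span ℝ {1, X i ^ 2}) ⊔ Wspace n i :=
  adini_type_pderiv_decomposition_general n i v hv
end

section
/- If $v \in \mathcal{P}_A$ (Adini-type shape space) in $n$ variables and $v$ vanishes identically on every face $x_i = \pm 1$ of $[-1,1]^n$, then $v$ is divisible by $\prod_{i=1}^n (x_i^2 - 1)$; moreover since the total degree in each variable of elements of $\mathcal{P}_A$ constrains this, any such $v$ with all Adini-type DoFs zero must satisfy $v = 0$ given the inductive face structure. -/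
/-!
Substituting `x_a := c` is an algebra endomorphism whose kernel is generated by `x_a - c`, so a
polynomial vanishing on the faces `x_a = ±1` is divisible by `(x_a - 1)(x_a + 1)`; dividing out one
such factor keeps the vanishing on the faces of the other variables, because the factor does not
vanish identically there.

For unisolvence we induct on the set of variables that `v` involves. Every monomial of `P_A` has at
most one exponent `≥ 2` and none `> 5`; this exponent set is a lower set, hence is preserved by
substituting a variable, and restricting to a face `x_a = ±1` keeps all degrees of freedom zero. By
induction `v` vanishes on all faces of the variables it involves. If there are two of them, `x_i`
and `x_j`, then `(x_i² - 1)(x_j² - 1)` divides `v`, so the leading monomial of `v` has exponent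
`≥ 2` in both. If there is a single one, `x_a`, the derivative degrees of freedom turn `±1` into
triple roots, so `(x_a² - 1)³` divides `v`, against the exponent bound `5`.
-/

open MvPolynomial

namespace MvPolynomial

section RestrictSupport

variable {σ R : Type*} [CommRing R]

lemma map_mem_restrictSupport {S T : Set (σ →₀ ℕ)}
    (f : MvPolynomial σ R →ₗ[R] MvPolynomial σ R)
    (hf : ∀ α ∈ S, f (monomial α 1) ∈ restrictSupport R T) {p : MvPolynomial σ R}
    (hp : p ∈ restrictSupport R S) : f p ∈ restrictSupport R T := by
  have hle : restrictSupport R S ≤ (restrictSupport R T).comap f := by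
    rw [restrictSupport_eq_span, Submodule.span_le]
    rintro _ ⟨α, hα, rfl⟩
    exact hf α hα
  exact hle hp

lemma pderiv_mem_restrictSupport {S : Set (σ →₀ ℕ)} (hS : IsLowerSet S) (j : σ)
    {p : MvPolynomial σ R} (hp : p ∈ restrictSupport R S) :
    pderiv j p ∈ restrictSupport R S :=
  map_mem_restrictSupport (pderiv j).toLinearMap
    (fun α hα => by
      simpa [pderiv_monomial, monomial_mem_restrictSupport] using Or.inl (hS tsub_le_self hα))
    hp

lemma eq_zero_of_mem_restrictSupport_zero {p : MvPolynomial σ R}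
    (hp : p ∈ restrictSupport R {0}) {x : σ → R} (hx : eval x p = 0) : p = 0 := by
  classical
  have hC : p = C (coeff 0 p) := by
    ext β
    rw [coeff_C]
    split_ifs with h
    · rw [h]
    · exact notMem_support_iff.1 fun hβ => h (hp hβ).symm
  rw [hC, eval_C] at hx
  rw [hC, hx, map_zero]

lemma isLowerSet_support_subset (t : Finset σ) :
    IsLowerSet {β : σ →₀ ℕ | β.support ⊆ t} :=
  fun _ _ h hβ => (Finsupp.support_mono h).trans hβ

end RestrictSupport

section Substitution

variable {σ R : Type*} [DecidableEq σ] [CommRing R]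

noncomputable def substVar (a : σ) (c : R) : MvPolynomial σ R →ₐ[R] MvPolynomial σ R :=
  aeval (Function.update X a (C c))

@[simp]
lemma substVar_X_self (a : σ) (c : R) : substVar a c (X a) = C c := by
  simp [substVar]

@[simp]
lemma substVar_X_of_ne {a i : σ} (c : R) (h : i ≠ a) : substVar a c (X i) = X i := by
  simp [substVar, h]

lemma eval_substVar (a : σ) (c : R) (x : σ → R) (p : MvPolynomial σ R) :
    eval x (substVar a c p) = eval (Function.update x a c) p := by
  rw [substVar, aeval_eq_bind₁]
  refine (eval₂Hom_bind₁ (RingHom.id R) x _ p).trans (congrArg (eval · p) ?_)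
  ext i
  by_cases h : i = a <;> simp [h]

lemma substVar_monomial (a : σ) (c : R) (α : σ →₀ ℕ) (r : R) :
    substVar a c (monomial α r) = monomial (α.erase a) (c ^ α a * r) := by
  rw [substVar, aeval_monomial, ← Finsupp.mul_prod_erase' α a _ (fun _ => pow_zero _),
    Function.update_self, monomial_eq, Finsupp.prod_congr (g2 := fun i k => X i ^ k)]
  · simp only [algebraMap_eq, C_mul, map_pow]
    ring
  · intro i hi
    rw [Finsupp.support_erase] at hi
    rw [Function.update_of_ne (Finset.ne_of_mem_erase hi)]

lemma substVar_mem_restrictSupport {S : Set (σ →₀ ℕ)} (hS : IsLowerSet S) (a : σ) (c : R)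
    {p : MvPolynomial σ R} (hp : p ∈ restrictSupport R S) :
    substVar a c p ∈ restrictSupport R {β ∈ S | β a = 0} := by
  refine map_mem_restrictSupport (substVar a c).toLinearMap (fun α hα => ?_) hp
  have hle : α.erase a ≤ α := fun i => by
    rw [Finsupp.erase_apply]
    split_ifs <;> simp
  simpa [substVar_monomial, monomial_mem_restrictSupport] using Or.inl (hS hle hα)

lemma substVar_eq_zero_of_support_subset_singleton {a : σ} {c : R} {p : MvPolynomial σ R}
    (hp : p ∈ restrictSupport R {β | β.support ⊆ {a}}) (h : eval (fun _ => c) p = 0) :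
    substVar a c p = 0 := by
  refine eq_zero_of_mem_restrictSupport_zero (restrictSupport_mono R ?_
    (substVar_mem_restrictSupport (isLowerSet_support_subset {a}) a c hp)) (x := fun _ => c) ?_
  · rintro β ⟨hβ, hβa⟩
    ext i
    rcases eq_or_ne i a with rfl | hi
    · exact hβa
    · exact Finsupp.notMem_support_iff.1 fun h => hi (Finset.mem_singleton.1 (hβ h))
  · simpa [eval_substVar] using h

lemma pderiv_substVar_self (a : σ) (c : R) (p : MvPolynomial σ R) :
    pderiv a (substVar a c p) = 0 := by
  induction p using MvPolynomial.induction_on with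
  | C r => simp
  | add p q hp hq => simp [hp, hq]
  | mul_X p i hp => by_cases h : i = a <;> simp [hp, h]

lemma pderiv_substVar_of_ne {a j : σ} (c : R) (h : j ≠ a) (p : MvPolynomial σ R) :
    pderiv j (substVar a c p) = substVar a c (pderiv j p) := by
  induction p using MvPolynomial.induction_on with
  | C r => simp
  | add p q hp hq => simp [hp, hq]
  | mul_X p i hp =>
    by_cases hi : i = a <;> by_cases hij : i = j <;> simp_all

lemma X_sub_C_dvd_sub_substVar (a : σ) (c : R) (p : MvPolynomial σ R) :
    X a - C c ∣ p - substVar a c p := by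
  induction p using MvPolynomial.induction_on with
  | C r => simp [substVar]
  | add p q hp hq => simpa [add_sub_add_comm] using dvd_add hp hq
  | mul_X p i hp =>
    have hX : X a - C c ∣ X i - substVar a c (X i) := by
      by_cases hi : i = a <;> simp [hi]
    rw [map_mul, show p * X i - substVar a c p * substVar a c (X i) =
      (p - substVar a c p) * X i + substVar a c p * (X i - substVar a c (X i)) by ring]
    exact dvd_add (dvd_mul_of_dvd_left hp _) (dvd_mul_of_dvd_right hX _)

lemma X_sub_C_dvd_of_substVar_eq_zero {a : σ} {c : R} {p : MvPolynomial σ R}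
    (h : substVar a c p = 0) : X a - C c ∣ p := by
  simpa [h] using X_sub_C_dvd_sub_substVar a c p

end Substitution

section Divisibility

variable {σ K : Type*} [Field K]

lemma X_sub_C_ne_zero (a : σ) (c : K) : (X a - C c : MvPolynomial σ K) ≠ 0 := fun h => by
  classical
  have h0 : (0 : σ →₀ ℕ) ≠ Finsupp.single a 1 := (Finsupp.single_ne_zero.2 one_ne_zero).symm
  simpa [h0] using congrArg (coeff (Finsupp.single a 1)) h

lemma isCoprime_X_sub_C (a : σ) {c d : K} (h : c ≠ d) :
    IsCoprime (X a - C c : MvPolynomial σ K) (X a - C d) := by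
  refine ⟨-C (c - d)⁻¹, C (c - d)⁻¹, ?_⟩
  have hinv : C (c - d)⁻¹ * (C c - C d) = (1 : MvPolynomial σ K) := by
    rw [← map_sub, ← C_mul, inv_mul_cancel₀ (sub_ne_zero.2 h), C_1]
  linear_combination hinv

variable [DecidableEq σ]

lemma substVar_eq_zero_of_eval [Infinite K] {a : σ} {c : K} {p : MvPolynomial σ K}
    (h : ∀ x : σ → K, x a = c → eval x p = 0) : substVar a c p = 0 :=
  MvPolynomial.funext fun x => by
    rw [eval_substVar, map_zero]
    exact h _ (Function.update_self a c x)

lemma mul_X_sub_C_dvd_of_substVar_eq_zero {a : σ} {c d : K} (hcd : c ≠ d)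
    {p : MvPolynomial σ K} (hc : substVar a c p = 0) (hd : substVar a d p = 0) :
    (X a - C c) * (X a - C d) ∣ p :=
  (isCoprime_X_sub_C a hcd).mul_dvd (X_sub_C_dvd_of_substVar_eq_zero hc)
    (X_sub_C_dvd_of_substVar_eq_zero hd)

lemma prod_mul_X_sub_C_dvd_of_substVar_eq_zero {c d : K} (hcd : c ≠ d) (s : Finset σ)
    {p : MvPolynomial σ K} (h : ∀ i ∈ s, substVar i c p = 0 ∧ substVar i d p = 0) :
    ∏ i ∈ s, (X i - C c) * (X i - C d) ∣ p := by
  induction s using Finset.induction_on generalizing p with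
  | empty => simp
  | insert a s ha ih =>
    obtain ⟨hc, hd⟩ := h a (Finset.mem_insert_self a s)
    obtain ⟨w, rfl⟩ := mul_X_sub_C_dvd_of_substVar_eq_zero hcd hc hd
    rw [Finset.prod_insert ha]
    refine mul_dvd_mul_left _ (ih fun i hi => ?_)
    have hia : a ≠ i := fun h => ha (h ▸ hi)
    have hq : (X a - C c) * (X a - C d) ≠ (0 : MvPolynomial σ K) :=
      mul_ne_zero (X_sub_C_ne_zero a c) (X_sub_C_ne_zero a d)
    have hsubst : ∀ e, substVar i e ((X a - C c) * (X a - C d) * w) =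
        (X a - C c) * (X a - C d) * substVar i e w := fun e => by
      simp [hia]
    obtain ⟨hic, hid⟩ := h i (Finset.mem_insert_of_mem hi)
    rw [hsubst] at hic hid
    exact ⟨(mul_eq_zero.1 hic).resolve_left hq, (mul_eq_zero.1 hid).resolve_left hq⟩

lemma X_sub_C_pow_three_dvd [CharZero K] {a : σ} {c : K} {p : MvPolynomial σ K}
    (h₀ : substVar a c p = 0) (h₁ : substVar a c (pderiv a p) = 0)
    (h₂ : substVar a c (pderiv a (pderiv a p)) = 0) : (X a - C c) ^ 3 ∣ p := by
  set e : MvPolynomial σ K := X a - C c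
  have he₀ : substVar a c e = 0 := by simp [e]
  have he₁ : pderiv a e = 1 := by simp [e]
  obtain ⟨w, rfl⟩ := X_sub_C_dvd_of_substVar_eq_zero h₀
  have hw : substVar a c w = 0 := by
    simpa [pderiv_mul, he₀, he₁] using h₁
  obtain ⟨u, rfl⟩ := X_sub_C_dvd_of_substVar_eq_zero hw
  have hu : substVar a c u = 0 := by
    have hdd : pderiv a (pderiv a (e * (e * u))) =
        2 * u + e * (4 * pderiv a u + e * pderiv a (pderiv a u)) := by
      simp only [pderiv_mul, he₁, map_add, Derivation.map_one_eq_zero]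
      ring
    simpa [hdd, he₀] using h₂
  obtain ⟨t, rfl⟩ := X_sub_C_dvd_of_substVar_eq_zero hu
  exact ⟨t, by ring⟩

end Divisibility

end MvPolynomial

namespace MonomialOrder

lemma degree_mem_of_dvd {σ R : Type*} [CommRing R] [NoZeroDivisors R]
    (m : MonomialOrder σ) {S : Set (σ →₀ ℕ)} (hS : IsLowerSet S) {f p : MvPolynomial σ R}
    (hp : p ∈ restrictSupport R S) (hp₀ : p ≠ 0) (hfp : f ∣ p) : m.degree f ∈ S := by
  obtain ⟨g, rfl⟩ := hfp
  refine hS (le_self_add : m.degree f ≤ m.degree f + m.degree g) (hp ?_)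
  rw [← m.degree_mul (left_ne_zero_of_mul hp₀) (right_ne_zero_of_mul hp₀)]
  exact m.degree_mem_support hp₀

lemma degree_mul_X_sub_C {σ K : Type*} [Field K] (m : MonomialOrder σ) (a : σ)
    (c d : K) : m.degree ((X a - C c) * (X a - C d)) = Finsupp.single a 2 := by
  rw [m.degree_mul (X_sub_C_ne_zero a c) (X_sub_C_ne_zero a d), m.degree_X_sub_C, m.degree_X_sub_C,
    ← Finsupp.single_add]

end MonomialOrder

section Adini

variable {σ : Type*}

def adiniExponents (σ : Type*) : Set (σ →₀ ℕ) :=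
  {α | (∀ i j, 2 ≤ α i → 2 ≤ α j → i = j) ∧ ∀ i, α i ≤ 5}

lemma isLowerSet_adiniExponents : IsLowerSet (adiniExponents σ) :=
  fun _ _ hle hα => ⟨fun i j hi hj => hα.1 i j (hi.trans (hle i)) (hj.trans (hle j)),
    fun i => (hle i).trans (hα.2 i)⟩

lemma add_single_mem_adiniExponents [DecidableEq σ] {α : σ →₀ ℕ} (hα : ∀ i, α i ≤ 1) (k : σ)
    {e : ℕ} (he : e ≤ 4) : α + Finsupp.single k e ∈ adiniExponents σ := by
  have hk : ∀ i, 2 ≤ (α + Finsupp.single k e) i → i = k := fun i hi => by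
    by_contra h
    simp [Ne.symm h] at hi
    linarith [hα i]
  refine ⟨fun i j hi hj => (hk i hi).trans (hk j hj).symm, fun i => ?_⟩
  have := hα i
  simp only [Finsupp.coe_add, Pi.add_apply, Finsupp.single_apply]
  split_ifs <;> omega

lemma prodSpan_le_mul {n : ℕ} (A B : Submodule ℝ (MvPolynomial (Fin n) ℝ)) :
    prodSpan A B ≤ A * B :=
  Submodule.span_le.2 fun _ ⟨_, ha, _, hb, hab⟩ => hab ▸ Submodule.mul_mem_mul ha hb

lemma PA_le_restrictSupport (n : ℕ) : PA n ≤ restrictSupport ℝ (adiniExponents (Fin n)) := by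
  have hQ1 : Q1 n ≤ restrictSupport ℝ {α | ∀ i, α i ≤ 1} :=
    Submodule.span_le.2 fun _ ⟨α, hα, hp⟩ => hp ▸ (monomial_mem_restrictSupport ℝ).2 (Or.inl hα)
  have hB : Submodule.span ℝ ({1} ∪ {p | ∃ k : Fin n, p = X k ^ 2 ∨ p = X k ^ 4}) ≤
      restrictSupport ℝ ({0} ∪ {β | ∃ k, β = Finsupp.single k 2 ∨ β = Finsupp.single k 4}) := by
    refine Submodule.span_le.2 ?_
    rintro _ (rfl | ⟨k, rfl | rfl⟩) <;>
      simp only [SetLike.mem_coe, ← C_1, C_apply, X_pow_eq_monomial, monomial_mem_restrictSupport]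
    · exact Or.inl (Or.inl rfl)
    · exact Or.inl (Or.inr ⟨k, Or.inl rfl⟩)
    · exact Or.inl (Or.inr ⟨k, Or.inr rfl⟩)
  refine (prodSpan_le_mul _ _).trans ((mul_le_mul' hQ1 hB).trans ?_)
  rw [← restrictSupport_add]
  refine restrictSupport_mono ℝ ?_
  rintro _ ⟨α, hα, β, (rfl | ⟨k, rfl | rfl⟩), rfl⟩
  · simp only [add_zero]
    exact ⟨fun i _ hi => absurd (hi.trans (hα i)) (by norm_num),
      fun i => (hα i).trans (by norm_num)⟩
  · exact add_single_mem_adiniExponents hα k (by norm_num)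
  · exact add_single_mem_adiniExponents hα k le_rfl

end Adini

section Unisolvence

variable {σ : Type*}

def IsCubeVertex (x : σ → ℝ) : Prop := ∀ i, x i = 1 ∨ x i = -1

def AdiniDofsVanish (v : MvPolynomial σ ℝ) : Prop :=
  ∀ x, IsCubeVertex x →
    eval x v = 0 ∧ ∀ j, eval x (pderiv j v) = 0 ∧ eval x (pderiv j (pderiv j v)) = 0

variable [DecidableEq σ]

lemma IsCubeVertex.update {x : σ → ℝ} (hx : IsCubeVertex x) (a : σ) {c : ℝ}
    (hc : c = 1 ∨ c = -1) : IsCubeVertex (Function.update x a c) := fun i => by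
  rcases eq_or_ne i a with rfl | hi
  · simpa
  · simpa [hi] using hx i

lemma AdiniDofsVanish.substVar {v : MvPolynomial σ ℝ} (h : AdiniDofsVanish v) (a : σ) {c : ℝ}
    (hc : c = 1 ∨ c = -1) : AdiniDofsVanish (substVar a c v) := by
  intro x hx
  obtain ⟨h₀, h₁⟩ := h _ (hx.update a hc)
  refine ⟨by rwa [eval_substVar], fun j => ?_⟩
  rcases eq_or_ne j a with rfl | hj
  · simp [pderiv_substVar_self]
  · simpa only [pderiv_substVar_of_ne c hj, eval_substVar] using h₁ j

lemma AdiniDofsVanish.pow_three_dvd {a : σ} {v : MvPolynomial σ ℝ}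
    (hv : v ∈ restrictSupport ℝ {β | β.support ⊆ {a}}) (h : AdiniDofsVanish v) :
    ((X a - C 1) * (X a - C (-1))) ^ 3 ∣ v := by
  have hface {p : MvPolynomial σ ℝ} (hp : p ∈ restrictSupport ℝ {β | β.support ⊆ {a}})
      (hp₀ : ∀ x, IsCubeVertex x → eval x p = 0) {c : ℝ} (hc : c = 1 ∨ c = -1) :
      MvPolynomial.substVar a c p = 0 :=
    substVar_eq_zero_of_support_subset_singleton hp (hp₀ _ fun _ => hc)
  have hv' := pderiv_mem_restrictSupport (isLowerSet_support_subset {a}) a hv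
  have hcube {c : ℝ} (hc : c = 1 ∨ c = -1) : (X a - C c) ^ 3 ∣ v :=
    X_sub_C_pow_three_dvd (hface hv (fun x hx => (h x hx).1) hc)
      (hface hv' (fun x hx => ((h x hx).2 a).1) hc)
      (hface (pderiv_mem_restrictSupport (isLowerSet_support_subset {a}) a hv')
        (fun x hx => ((h x hx).2 a).2) hc)
  rw [mul_pow]
  exact (isCoprime_X_sub_C a (by norm_num)).pow.mul_dvd (hcube (Or.inl rfl)) (hcube (Or.inr rfl))

theorem eq_zero_of_adiniDofsVanish {n : ℕ} (t : Finset (Fin n)) {v : MvPolynomial (Fin n) ℝ}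
    (hv : v ∈ restrictSupport ℝ (adiniExponents (Fin n) ∩ {α | α.support ⊆ t}))
    (h : AdiniDofsVanish v) : v = 0 := by
  induction t using Finset.strongInduction generalizing v with
  | H t ih =>
  have hface : ∀ a ∈ t, ∀ c : ℝ, c = 1 ∨ c = -1 → substVar a c v = 0 := by
    intro a ha c hc
    refine ih _ (Finset.erase_ssubset ha) (restrictSupport_mono ℝ ?_ (substVar_mem_restrictSupport
      (isLowerSet_adiniExponents.inter (isLowerSet_support_subset t)) a c hv)) (h.substVar a hc)
    rintro β ⟨⟨hβ, hβt⟩, hβa⟩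
    exact ⟨hβ, Finset.subset_erase.2 ⟨hβt, Finsupp.notMem_support_iff.2 hβa⟩⟩
  have hvS := restrictSupport_mono ℝ Set.inter_subset_left hv
  have hvt := restrictSupport_mono ℝ Set.inter_subset_right hv
  by_contra hv₀
  let m : MonomialOrder (Fin n) := .lex
  rcases t.eq_empty_or_nonempty with rfl | ht
  · refine hv₀ (eq_zero_of_mem_restrictSupport_zero (restrictSupport_mono ℝ ?_ hvt)
      (h (fun _ => 1) fun _ => Or.inl rfl).1)
    exact fun β hβ => Finsupp.support_eq_empty.1 (Finset.subset_empty.1 hβ)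
  obtain ⟨a, rfl⟩ | ⟨i, hi, j, hj, hij⟩ := ht.exists_eq_singleton_or_nontrivial
  · have hdeg := m.degree_mem_of_dvd isLowerSet_adiniExponents hvS hv₀ (h.pow_three_dvd hvt)
    rw [m.degree_pow, m.degree_mul_X_sub_C] at hdeg
    simpa using hdeg.2 a
  · have hij_sub : {i, j} ⊆ t := Finset.insert_subset hi (Finset.singleton_subset_iff.2 hj)
    have hdvd := prod_mul_X_sub_C_dvd_of_substVar_eq_zero (by norm_num : (1 : ℝ) ≠ -1) {i, j}
      (p := v) fun k hk =>
        ⟨hface k (hij_sub hk) 1 (Or.inl rfl), hface k (hij_sub hk) (-1) (Or.inr rfl)⟩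
    rw [Finset.prod_pair hij] at hdvd
    have hdeg := m.degree_mem_of_dvd isLowerSet_adiniExponents hvS hv₀ hdvd
    rw [m.degree_mul (left_ne_zero_of_mul (ne_zero_of_dvd_ne_zero hv₀ hdvd))
      (right_ne_zero_of_mul (ne_zero_of_dvd_ne_zero hv₀ hdvd)),
      m.degree_mul_X_sub_C, m.degree_mul_X_sub_C] at hdeg
    exact hij (hdeg.1 i j (by simp [hij]) (by simp [hij]))

end Unisolvence

theorem adini_divisibility_and_unisolvence_general (n : ℕ) :
    (∀ v : MvPolynomial (Fin n) ℝ,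
      (∀ i : Fin n, ∀ a : Fin n → ℝ, (a i = 1 ∨ a i = -1) → eval a v = 0) →
      (∏ i, (X i - 1) * (X i + 1)) ∣ v) ∧
    (∀ v ∈ PA n,
      (∀ a : Fin n → ℝ, (∀ i, a i = 1 ∨ a i = -1) →
        eval a v = 0 ∧ ∀ j : Fin n, eval a (pderiv j v) = 0 ∧
          eval a (pderiv j (pderiv j v)) = 0) →
      v = 0) := by
  refine ⟨fun v hv => ?_, fun v hv h => ?_⟩
  · have hdvd := prod_mul_X_sub_C_dvd_of_substVar_eq_zero (by norm_num : (1 : ℝ) ≠ -1) .univ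
      (p := v) fun i _ => ⟨substVar_eq_zero_of_eval fun x hx => hv i x (.inl hx),
        substVar_eq_zero_of_eval fun x hx => hv i x (.inr hx)⟩
    simpa using hdvd
  · refine eq_zero_of_adiniDofsVanish .univ
      (restrictSupport_mono ℝ ?_ (PA_le_restrictSupport n hv)) h
    exact fun α hα => ⟨hα, Finset.subset_univ _⟩

/-- A polynomial vanishing identically on every hyperplane `x_i = 1` and `x_i = -1`
is divisible by `Π_i (x_i - 1)(x_i + 1)`; moreover, an element of the Adini-type
shape space `P_A` all of whose Adini-type degrees of freedom (vertex values,
first derivatives, and pure second derivatives at the vertices `{-1,1}^n`) vanish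
must be zero. -/
theorem adini_divisibility_and_unisolvence (n : ℕ) (hn : 1 ≤ n) :
    (∀ v : MvPolynomial (Fin n) ℝ,
      (∀ i : Fin n, ∀ a : Fin n → ℝ, (a i = 1 ∨ a i = -1) → eval a v = 0) →
      (∏ i, (X i - 1) * (X i + 1)) ∣ v) ∧
    (∀ v ∈ PA n,
      (∀ a : Fin n → ℝ, (∀ i, a i = 1 ∨ a i = -1) →
        eval a v = 0 ∧ ∀ j : Fin n, eval a (pderiv j v) = 0 ∧
          eval a (pderiv j (pderiv j v)) = 0) →
      v = 0) :=
  adini_divisibility_and_unisolvence_general n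
end
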